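/- There exists an angle φ < π/2 such that every eigenvalue μ of the matrix M = [[0,1,0],[−1,0,−1],[0,1,1]] satisfies μ ≠ 0 and |arg μ| < φ. Equivalently, the spectrum of the symbol a(ζ) = M|ζ|² is contained in the open sector Σ_φ = {z ∈ ℂ \ {0} : |arg z| < φ} for all ζ ∈ ℝⁿ \ {0}. -/

import Mathlib

/-!
The characteristic polynomial of `M` is `μ³ - μ² + 2μ - 1`. Every root `μ = x + iy` satisfies
`‖μ‖ < 8 x`, so `cos (arg μ) > 1/8` and `|arg μ| < arccos (1/8) < π/2`. Multiplying a matrix by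
the positive real `‖ζ‖²` scales its spectrum by `‖ζ‖²`, which does not change arguments.
-/

open Real

abbrev thermoelasticMatrix : Matrix (Fin 3) (Fin 3) ℂ := !![0, 1, 0; -1, 0, -1; 0, 1, 1]

/-- The paper's `Σ_φ`. -/
def sector (φ : ℝ) : Set ℂ := {z | z ≠ 0 ∧ |z.arg| < φ}

lemma ofReal_mul_mem_sector {φ r : ℝ} {z : ℂ} (hr : 0 < r) (hz : z ∈ sector φ) :
    (r : ℂ) * z ∈ sector φ :=
  ⟨mul_ne_zero (Complex.ofReal_ne_zero.mpr hr.ne') hz.1, by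
    rw [Complex.arg_real_mul z hr]; exact hz.2⟩

lemma spectrum_ofReal_smul_subset_sector {A : Type*} [Ring A] [Algebra ℂ A] {a : A} {φ r : ℝ}
    (hr : 0 < r) (ha : spectrum ℂ a ⊆ sector φ) : spectrum ℂ ((r : ℂ) • a) ⊆ sector φ := by
  have hunit : (r : ℂ) • a = Units.mk0 (r : ℂ) (Complex.ofReal_ne_zero.mpr hr.ne') • a := rfl
  rw [hunit, spectrum.unit_smul_eq_smul]
  rintro _ ⟨μ, hμ, rfl⟩
  exact ofReal_mul_mem_sector hr (ha hμ)

lemma Complex.abs_arg_eq_arccos {z : ℂ} (hz : z ≠ 0) : |z.arg| = arccos (z.re / ‖z‖) := by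
  rcases le_or_gt 0 z.im with him | him
  · rw [arg_of_im_nonneg_of_ne_zero him hz, abs_of_nonneg (arccos_nonneg _)]
  · rw [arg_of_im_neg him, abs_neg, abs_of_nonneg (arccos_nonneg _)]

lemma Complex.abs_arg_lt_arccos_of_mul_norm_lt_re {z : ℂ} {c : ℝ} (hc : -1 ≤ c)
    (h : c * ‖z‖ < z.re) : |z.arg| < arccos c := by
  have hz : z ≠ 0 := by rintro rfl; simp at h
  rw [abs_arg_eq_arccos hz]
  exact arccos_lt_arccos hc ((lt_div_iff₀ (norm_pos_iff.mpr hz)).mpr h)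
    (abs_le.mp (abs_re_div_norm_le_one z)).2

lemma mem_spectrum_thermoelasticMatrix_iff {μ : ℂ} :
    μ ∈ spectrum ℂ thermoelasticMatrix ↔ μ ^ 3 - μ ^ 2 + 2 * μ - 1 = 0 := by
  have hdet : (Matrix.scalar (Fin 3) μ - thermoelasticMatrix).det = μ ^ 3 - μ ^ 2 + 2 * μ - 1 := by
    simp [Matrix.det_fin_three]
    ring
  rw [Matrix.mem_spectrum_iff_isRoot_charpoly, Polynomial.IsRoot, Matrix.eval_charpoly, hdet]

lemma norm_lt_eight_mul_re_of_cubic {μ : ℂ} (h : μ ^ 3 - μ ^ 2 + 2 * μ - 1 = 0) :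
    ‖μ‖ < 8 * μ.re := by
  obtain ⟨x, y⟩ := μ
  rw [Complex.ext_iff] at h
  simp only [pow_succ, pow_zero, one_mul, Complex.sub_re, Complex.sub_im, Complex.add_re,
    Complex.add_im, Complex.mul_re, Complex.mul_im, Complex.re_ofNat, Complex.im_ofNat,
    Complex.one_re, Complex.one_im, Complex.zero_re, Complex.zero_im] at h
  have hre : x ^ 3 - 3 * x * y ^ 2 - (x ^ 2 - y ^ 2) + 2 * x - 1 = 0 := by
    linear_combination h.1
  have him : y * (3 * x ^ 2 - y ^ 2 - 2 * x + 2) = 0 := by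
    linear_combination h.2
  have hnorm : ‖(⟨x, y⟩ : ℂ)‖ ^ 2 = x ^ 2 + y ^ 2 := by
    rw [Complex.sq_norm, Complex.normSq_apply]; ring
  suffices hx : 1 / 5 < x ∧ x ^ 2 + y ^ 2 < 64 * x ^ 2 by
    show _ < 8 * x
    exact lt_of_pow_lt_pow_left₀ 2 (by linarith) (by nlinarith)
  -- Either `μ` is real, or `y² = 3x² - 2x + 2` and `x` is a root of `8x³ - 8x² + 6x - 1`;
  -- in both cases `x > 1/5`, which is what makes `60x² + 2x - 2 > 0`.
  rcases mul_eq_zero.mp him with hy | hy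
  · subst hy
    have hx : 1 / 5 < x := by nlinarith [sq_nonneg (x - 2 / 5), sq_nonneg x, sq_nonneg (x - 1)]
    exact ⟨hx, by nlinarith⟩
  · have hy2 : y ^ 2 = 3 * x ^ 2 - 2 * x + 2 := by linarith
    have hcubic : 8 * x ^ 3 - 8 * x ^ 2 + 6 * x - 1 = 0 := by rw [hy2] at hre; linarith
    have hx : 1 / 5 < x := by nlinarith [sq_nonneg (x - 1 / 3), sq_nonneg x]
    exact ⟨hx, by nlinarith⟩

lemma spectrum_thermoelasticMatrix_subset_sector :
    spectrum ℂ thermoelasticMatrix ⊆ sector (arccos (1 / 8)) := by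
  intro μ hμ
  have hlt := norm_lt_eight_mul_re_of_cubic (mem_spectrum_thermoelasticMatrix_iff.mp hμ)
  have hre : 1 / 8 * ‖μ‖ < μ.re := by linarith
  refine ⟨?_, Complex.abs_arg_lt_arccos_of_mul_norm_lt_re (by norm_num) hre⟩
  rintro rfl
  simp at hlt

/-- There exists an angle `φ < π/2` such that every eigenvalue `μ` of
`M = [[0,1,0],[-1,0,-1],[0,1,1]]` is nonzero with `|arg μ| < φ`; equivalently the spectrum
of the symbol `a(ζ) = M |ζ|²` lies in the open sector `Σ_φ` for all `ζ ≠ 0`. -/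
theorem thermoelastic_matrix_sector :
    ∃ φ : ℝ, φ < π / 2 ∧ 0 ≤ φ ∧
      (∀ μ ∈ spectrum ℂ (!![(0:ℂ), 1, 0; -1, 0, -1; 0, 1, 1]), μ ≠ 0 ∧ |μ.arg| < φ) ∧
      (∀ (n : ℕ) (ζ : EuclideanSpace ℝ (Fin n)), ζ ≠ 0 →
        ∀ z ∈ spectrum ℂ (((‖ζ‖ ^ 2 : ℝ) : ℂ) • !![(0:ℂ), 1, 0; -1, 0, -1; 0, 1, 1]),
          z ≠ 0 ∧ |z.arg| < φ) := by
  refine ⟨arccos (1 / 8), arccos_lt_pi_div_two.mpr (by norm_num), arccos_nonneg _,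
    fun μ hμ => spectrum_thermoelasticMatrix_subset_sector hμ, ?_⟩
  intro n ζ hζ
  exact spectrum_ofReal_smul_subset_sector (pow_pos (norm_pos_iff.mpr hζ) 2)
    spectrum_thermoelasticMatrix_subset_sector
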